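/- If u and v are nonempty words over {A,B} of different lengths, then ρ(u) + ρ̄(v) ≠ 1, where ρ and ρ̄ are the end-marked binary encodings. -/

import Mathlib

/-!
Scaled by `2 ^ (|w| + 1)`, the encoding of `w` becomes an odd integer, because the end marker
contributes the only odd summand. Hence if `|u| < |v|`, scaling `ρ(u) + ρ̄(v) = 1` by
`2 ^ (|v| + 1)` gives an even integer plus an odd integer equal to the even integer `2 ^ (|v| + 1)`.
-/

/-- The end-marked binary encoding of a word over a two-element alphabet. -/
noncomputable def rho (θ : Bool → ℝ) (w : List Bool) : ℝ :=
  (∑ i : Fin w.length, θ (w.get i) * (1 / 2 : ℝ) ^ (i.val + 1)) + (1 / 2 : ℝ) ^ (w.length + 1)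

theorem rho_nil (θ : Bool → ℝ) : rho θ [] = 1 / 2 := by
  simp [rho]

theorem rho_cons (θ : Bool → ℝ) (a : Bool) (w : List Bool) :
    rho θ (a :: w) = (θ a + rho θ w) / 2 := by
  simp only [rho, List.length_cons, Fin.sum_univ_succ, List.get_eq_getElem, Fin.val_zero,
    Fin.val_succ, List.getElem_cons_zero, List.getElem_cons_succ]
  have shift : ∀ i : Fin w.length, θ w[i.val] * (1 / 2 : ℝ) ^ (i.val + 1 + 1)
      = θ w[i.val] * (1 / 2) ^ (i.val + 1) / 2 := fun i => by ring
  rw [Fintype.sum_congr _ _ shift, ← Finset.sum_div]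
  ring

section

variable {θ : Bool → ℝ}

theorem exists_rho_mul_two_pow_eq_odd (hθ : ∀ x, ∃ k : ℤ, θ x = k) (w : List Bool) :
    ∃ k : ℤ, rho θ w * 2 ^ (w.length + 1) = 2 * k + 1 := by
  induction w with
  | nil => exact ⟨0, by simp [rho_nil]⟩
  | cons a w ih =>
    obtain ⟨k, hk⟩ := ih
    obtain ⟨c, hc⟩ := hθ a
    refine ⟨c * 2 ^ w.length + k, ?_⟩
    calc rho θ (a :: w) * 2 ^ (w.length + 2)
        = θ a * 2 ^ (w.length + 1) + rho θ w * 2 ^ (w.length + 1) := by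
          rw [rho_cons]; ring
      _ = 2 * ↑(c * 2 ^ w.length + k) + 1 := by
          rw [hk, hc]; push_cast; ring

theorem exists_rho_mul_two_pow_eq_even (hθ : ∀ x, ∃ k : ℤ, θ x = k) {w : List Bool} {n : ℕ}
    (hn : w.length < n) : ∃ k : ℤ, rho θ w * 2 ^ (n + 1) = 2 * k := by
  obtain ⟨k, hk⟩ := exists_rho_mul_two_pow_eq_odd hθ w
  refine ⟨(2 * k + 1) * 2 ^ (n - w.length - 1), ?_⟩
  have hsplit : (2 : ℝ) ^ (n + 1) = 2 ^ (w.length + 1) * (2 * 2 ^ (n - w.length - 1)) := by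
    rw [← pow_succ', ← pow_add]
    congr 1
    omega
  rw [hsplit, ← mul_assoc, hk]
  push_cast
  ring

theorem rho_add_rho_ne_one_of_length_lt {θ' : Bool → ℝ} (hθ : ∀ x, ∃ k : ℤ, θ x = k)
    (hθ' : ∀ x, ∃ k : ℤ, θ' x = k) {u v : List Bool} (hlen : u.length < v.length) :
    rho θ u + rho θ' v ≠ 1 := by
  intro h
  obtain ⟨a, ha⟩ := exists_rho_mul_two_pow_eq_even hθ hlen
  obtain ⟨b, hb⟩ := exists_rho_mul_two_pow_eq_odd hθ' v
  have hreal : (2 * a + (2 * b + 1) : ℝ) = 2 * 2 ^ v.length := by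
    rw [← ha, ← hb, ← add_mul, h, one_mul, pow_succ']
  have hint : 2 * a + (2 * b + 1) = 2 * 2 ^ v.length := by exact_mod_cast hreal
  omega

end

theorem stmt_16_general (θ θbar : Bool → ℝ)
    (hθ : ∀ x, θ x = 0 ∨ θ x = 1) (hθbar : ∀ x, θbar x = 0 ∨ θbar x = 1)
    (u v : List Bool) (hlen : u.length ≠ v.length) :
    rho θ u + rho θbar v ≠ 1 := by
  have isInt : ∀ f : Bool → ℝ, (∀ x, f x = 0 ∨ f x = 1) → ∀ x, ∃ k : ℤ, f x = k := by
    intro f hf x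
    rcases hf x with h | h
    exacts [⟨0, by simp [h]⟩, ⟨1, by simp [h]⟩]
  rcases lt_or_gt_of_ne hlen with h | h
  · exact rho_add_rho_ne_one_of_length_lt (isInt θ hθ) (isInt θbar hθbar) h
  · rw [add_comm]
    exact rho_add_rho_ne_one_of_length_lt (isInt θbar hθbar) (isInt θ hθ) h

theorem stmt_16 (θ θbar : Bool → ℝ)
    (hθ : ∀ x, θ x = 0 ∨ θ x = 1) (hθbar : ∀ x, θbar x = 0 ∨ θbar x = 1)
    (hsum : ∀ x, θ x + θbar x = 1)
    (u v : List Bool) (hu : u ≠ []) (hv : v ≠ []) (hlen : u.length ≠ v.length) :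
    rho θ u + rho θbar v ≠ 1 :=
  stmt_16_general θ θbar hθ hθbar u v hlen
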